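/- arXiv:1702.03483 — 3 statements merged into one kernel-verified Lean document; each statement's English description precedes it below -/
import Mathlib

section
/- (Fannes–Audenaert inequality.) Let Φ and Ψ be two quantum states in a d-dimensional complex Hilbert space with ‖Φ − Ψ‖ ≤ μ < 1/e. Then |S(Φ) − S(Ψ)| ≤ μ log₂(d − 1) + h(μ), where h(ν) := −ν log₂ ν − (1 − ν) log₂(1 − ν) is the binary entropy. -/
open scoped BigOperators Kronecker ComplexOrder
open Matrix Filter MeasureTheory

noncomputable section

namespace AVQW

/-- `p` is a probability distribution on the finite type `X`. -/
def IsDist {X : Type*} [Fintype X] (p : X → ℝ) : Prop :=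
  (∀ x, 0 ≤ p x) ∧ ∑ x, p x = 1

/-- The uniform distribution on `Fin J`. -/
def uniformDist (J : ℕ) : Fin J → ℝ := fun _ => (J : ℝ)⁻¹

/-- `ρ` is a density operator (a quantum state). -/
def IsDensity {ι : Type*} [Fintype ι] [DecidableEq ι] (ρ : Matrix ι ι ℂ) : Prop :=
  ρ.PosSemidef ∧ ρ.trace = 1

/-- The trace norm (sum of the singular values) of a matrix. -/
def traceNorm {ι : Type*} [Fintype ι] [DecidableEq ι] (M : Matrix ι ι ℂ) : ℝ :=
  ∑ i, Real.sqrt ((Matrix.isHermitian_mul_conjTranspose_self M).eigenvalues i)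

/-- The von Neumann entropy, base 2. -/
def vnEntropy {ι : Type*} [Fintype ι] [DecidableEq ι] (ρ : Matrix ι ι ℂ) : ℝ :=
  if h : ρ.IsHermitian then (∑ i, Real.negMulLog (h.eigenvalues i)) / Real.log 2 else 0

/-- The Holevo χ quantity of the ensemble `(p, ρ)`. -/
def holevo {X ι : Type*} [Fintype X] [Fintype ι] [DecidableEq ι]
    (p : X → ℝ) (ρ : X → Matrix ι ι ℂ) : ℝ :=
  vnEntropy (∑ x, (p x : ℂ) • ρ x) - ∑ x, p x * vnEntropy (ρ x)

/-- Output state of a cq channel on the input distribution `p`. -/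
def cqApply {X ι : Type*} [Fintype X] (W : X → Matrix ι ι ℂ) (p : X → ℝ) :
    Matrix ι ι ℂ :=
  ∑ x, (p x : ℂ) • W x

/-- The `n`-block channel of an arbitrarily varying cq channel. -/
def nblock {θ A ι : Type*} (W : θ → A → Matrix ι ι ℂ) {n : ℕ}
    (t : Fin n → θ) (a : Fin n → A) : Matrix (Fin n → ι) (Fin n → ι) ℂ :=
  Matrix.of fun x y => ∏ i, W (t i) (a i) (x i) (y i)

/-- The `n`-fold tensor power of a single cq channel. -/
def pblock {A ι : Type*} (M : A → Matrix ι ι ℂ) (n : ℕ) (a : Fin n → A) :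
    Matrix (Fin n → ι) (Fin n → ι) ℂ :=
  Matrix.of fun x y => ∏ i, M (a i) (x i) (y i)

/-- The averaged channel `W_q = ∑_t q(t) W_t`. -/
def WtAvg {θ A ι : Type*} [Fintype θ] (W : θ → A → Matrix ι ι ℂ) (q : θ → ℝ) :
    A → Matrix ι ι ℂ :=
  fun a => ∑ t, (q t : ℂ) • W t a

/-- Symmetrizability of an arbitrarily varying cq channel. -/
def Symmetrizable {θ A ι : Type*} [Fintype θ] (W : θ → A → Matrix ι ι ℂ) : Prop :=
  ∃ τ : A → θ → ℝ, (∀ a, IsDist (τ a)) ∧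
    ∀ a a', ∑ t, (τ a t : ℂ) • W t a' = ∑ t, (τ a' t : ℂ) • W t a

/-- Symmetrizability of an arbitrarily varying classical channel. -/
def SymmetrizableC {θ A B : Type*} [Fintype θ] (Wc : θ → A → B → ℝ) : Prop :=
  ∃ τ : A → θ → ℝ, (∀ a, IsDist (τ a)) ∧
    ∀ a a' b, ∑ t, τ a t * Wc t a' b = ∑ t, τ a' t * Wc t a b

/-- The symmetrizability functional `F`. -/
def Fsym {θ A ι : Type*} [Fintype θ] [Fintype A] [Fintype ι] [DecidableEq ι]
    (W : θ → A → Matrix ι ι ℂ) : ℝ :=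
  sInf { x : ℝ | ∃ τ : A → θ → ℝ, (∀ a, IsDist (τ a)) ∧
    x = ⨆ a : A, ⨆ a' : A,
      traceNorm (∑ t, (τ a t : ℂ) • W t a' - ∑ t, (τ a' t : ℂ) • W t a) }

/-- A stochastic encoder. -/
def IsEncoder {A : Type*} [Fintype A] {n J : ℕ} (E : Fin J → (Fin n → A) → ℝ) : Prop :=
  ∀ j, IsDist (E j)

/-- A collection of decoder operators: a POVM. -/
def IsPOVM {κ ι : Type*} [Fintype κ] [Fintype ι] [DecidableEq ι]
    (D : κ → Matrix ι ι ℂ) : Prop :=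
  (∀ j, (D j).PosSemidef) ∧ ∑ j, D j = 1

/-- The average decoding error of a code at state sequence `t`. -/
def Pe {θ A ι : Type*} [Fintype A] [Fintype ι] {n J : ℕ}
    (W : θ → A → Matrix ι ι ℂ)
    (E : Fin J → (Fin n → A) → ℝ)
    (D : Fin J → Matrix (Fin n → ι) (Fin n → ι) ℂ)
    (t : Fin n → θ) : ℝ :=
  1 - (J : ℝ)⁻¹ * ∑ j, ((cqApply (nblock W t) (E j) * D j).trace).re

/-- The states the wiretapper obtains. -/
def wiretapOut {θ A ι' : Type*} [Fintype A] {n J : ℕ}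
    (V : θ → A → Matrix ι' ι' ℂ)
    (E : Fin J → (Fin n → A) → ℝ) (t : Fin n → θ) :
    Fin J → Matrix (Fin n → ι') (Fin n → ι') ℂ :=
  fun j => cqApply (nblock V t) (E j)

variable {θ A ι ι' : Type*} [Fintype θ] [Fintype A] [Fintype ι] [DecidableEq ι]
  [Fintype ι'] [DecidableEq ι']

/-- Achievable secrecy rate, deterministic codes. -/
def AchievableDet (W : θ → A → Matrix ι ι ℂ) (V : θ → A → Matrix ι' ι' ℂ) (R : ℝ) : Prop :=
  0 ≤ R ∧ ∀ ε > (0:ℝ), ∀ δ > (0:ℝ), ∀ ζ > (0:ℝ), ∃ N : ℕ, ∀ n ≥ N,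
    ∃ J : ℕ, 1 ≤ J ∧
    ∃ E : Fin J → (Fin n → A) → ℝ, ∃ D : Fin J → Matrix (Fin n → ι) (Fin n → ι) ℂ,
      IsEncoder E ∧ IsPOVM D ∧
      Real.logb 2 J / n > R - δ ∧
      (∀ t : Fin n → θ, Pe W E D t < ε) ∧
      (∀ t : Fin n → θ, holevo (uniformDist J) (wiretapOut V E t) < ζ)

/-- The deterministic secrecy capacity. -/
def Cs (W : θ → A → Matrix ι ι ℂ) (V : θ → A → Matrix ι' ι' ℂ) : ℝ :=
  sSup {R : ℝ | AchievableDet W V R}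

/-- Achievable secrecy rate under common randomness assisted coding
(the randomness not known to the jammer). -/
def AchievableCR (W : θ → A → Matrix ι ι ℂ) (V : θ → A → Matrix ι' ι' ℂ) (R : ℝ) : Prop :=
  0 ≤ R ∧ ∀ ε > (0:ℝ), ∀ δ > (0:ℝ), ∀ ζ > (0:ℝ), ∃ N : ℕ, ∀ n ≥ N,
    ∃ J : ℕ, 1 ≤ J ∧ ∃ K : ℕ, 1 ≤ K ∧
    ∃ E : Fin K → Fin J → (Fin n → A) → ℝ,
    ∃ D : Fin K → Fin J → Matrix (Fin n → ι) (Fin n → ι) ℂ,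
      (∀ γ, IsEncoder (E γ)) ∧ (∀ γ, IsPOVM (D γ)) ∧
      Real.logb 2 J / n > R - δ ∧
      (∀ t : Fin n → θ, (K : ℝ)⁻¹ * ∑ γ, Pe W (E γ) (D γ) t < ε) ∧
      (∀ t : Fin n → θ,
        (K : ℝ)⁻¹ * ∑ γ, holevo (uniformDist J) (wiretapOut V (E γ) t) < ζ)

/-- The common randomness assisted secrecy capacity. -/
def CsCR (W : θ → A → Matrix ι ι ℂ) (V : θ → A → Matrix ι' ι' ℂ) : ℝ :=
  sSup {R : ℝ | AchievableCR W V R}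

/-- Achievable secrecy rate using an amount `g` of secret common randomness
(secure against both the jammer and the eavesdropper: the wiretapper's ensemble
is averaged over the common randomness). -/
def AchievableKey (W : θ → A → Matrix ι ι ℂ) (V : θ → A → Matrix ι' ι' ℂ)
    (g R : ℝ) : Prop :=
  0 ≤ R ∧ ∀ ε > (0:ℝ), ∀ δ > (0:ℝ), ∀ ζ > (0:ℝ), ∃ N : ℕ, ∀ n ≥ N,
    ∃ J : ℕ, 1 ≤ J ∧ ∃ K : ℕ, 1 ≤ K ∧ Real.logb 2 K / n = g ∧
    ∃ E : Fin K → Fin J → (Fin n → A) → ℝ,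
    ∃ D : Fin K → Fin J → Matrix (Fin n → ι) (Fin n → ι) ℂ,
      (∀ γ, IsEncoder (E γ)) ∧ (∀ γ, IsPOVM (D γ)) ∧
      Real.logb 2 J / n > R - δ ∧
      (∀ t : Fin n → θ, (K : ℝ)⁻¹ * ∑ γ, Pe W (E γ) (D γ) t < ε) ∧
      (∀ t : Fin n → θ, holevo (uniformDist J)
        (fun j => (K : ℂ)⁻¹ • ∑ γ, wiretapOut V (E γ) t j) < ζ)

/-- The secret common randomness assisted secrecy capacity with key rate `g`. -/
def CKey (W : θ → A → Matrix ι ι ℂ) (V : θ → A → Matrix ι' ι' ℂ) (g : ℝ) : ℝ :=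
  sSup {R : ℝ | AchievableKey W V g R}

/-- Achievable secrecy rate under (secure) randomness assisted coding: a
distribution `G` on the set of codes, error and leakage in the mean,
maximized over the state sequence outside the integral. -/
def AchievableR (W : θ → A → Matrix ι ι ℂ) (V : θ → A → Matrix ι' ι' ℂ) (R : ℝ) : Prop :=
  0 ≤ R ∧ ∀ ε > (0:ℝ), ∀ δ > (0:ℝ), ∀ ζ > (0:ℝ), ∃ N : ℕ, ∀ n ≥ N,
    ∃ J : ℕ, 1 ≤ J ∧
    ∃ G : Measure ((Fin J → (Fin n → A) → ℝ) × (Fin J → (Fin n → ι) → (Fin n → ι) → ℂ)),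
      IsProbabilityMeasure G ∧
      G {γ | IsEncoder γ.1 ∧ IsPOVM fun j => Matrix.of (γ.2 j)} = 1 ∧
      Real.logb 2 J / n > R - δ ∧
      (∀ t : Fin n → θ, (∫ γ, Pe W γ.1 (fun j => Matrix.of (γ.2 j)) t ∂G) < ε) ∧
      (∀ t : Fin n → θ,
        (∫ γ, holevo (uniformDist J) (wiretapOut V γ.1 t) ∂G) < ζ)

/-- The (secure) randomness assisted secrecy capacity. -/
def CsR (W : θ → A → Matrix ι ι ℂ) (V : θ → A → Matrix ι' ι' ℂ) : ℝ :=
  sSup {R : ℝ | AchievableR W V R}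

/-- Achievable secrecy rate under non-secure randomness assisted coding: the
maximum over the state sequence is taken inside the integral (the jammer may
know the outcome of the shared random experiment). -/
def AchievableRns (W : θ → A → Matrix ι ι ℂ) (V : θ → A → Matrix ι' ι' ℂ) (R : ℝ) : Prop :=
  0 ≤ R ∧ ∀ ε > (0:ℝ), ∀ δ > (0:ℝ), ∀ ζ > (0:ℝ), ∃ N : ℕ, ∀ n ≥ N,
    ∃ J : ℕ, 1 ≤ J ∧
    ∃ G : Measure ((Fin J → (Fin n → A) → ℝ) × (Fin J → (Fin n → ι) → (Fin n → ι) → ℂ)),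
      IsProbabilityMeasure G ∧
      G {γ | IsEncoder γ.1 ∧ IsPOVM fun j => Matrix.of (γ.2 j)} = 1 ∧
      Real.logb 2 J / n > R - δ ∧
      (∫ γ, (⨆ t : Fin n → θ, Pe W γ.1 (fun j => Matrix.of (γ.2 j)) t) ∂G) < ε ∧
      (∫ γ, (⨆ t : Fin n → θ, holevo (uniformDist J) (wiretapOut V γ.1 t)) ∂G) < ζ

/-- The non-secure randomness assisted secrecy capacity. -/
def CsRns (W : θ → A → Matrix ι ι ℂ) (V : θ → A → Matrix ι' ι' ℂ) : ℝ :=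
  sSup {R : ℝ | AchievableRns W V R}

/-- The multi-letter secrecy quantity at blocklength `n`:
`max_{U → A^n} [ inf_{B_q ∈ Conv((B_t))} χ(p_U; B_q^{⊗n}) − max_{t^n} χ(p_U; Z_{t^n}) ]`. -/
def secrecyQuantity (W : θ → A → Matrix ι ι ℂ) (V : θ → A → Matrix ι' ι' ℂ)
    (n : ℕ) : ℝ :=
  sSup { x : ℝ | ∃ (m : ℕ) (pU : Fin m → ℝ) (T : Fin m → (Fin n → A) → ℝ),
    IsDist pU ∧ (∀ u, IsDist (T u)) ∧
    x = sInf { y : ℝ | ∃ q : θ → ℝ, IsDist q ∧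
          y = holevo pU (fun u => cqApply (pblock (WtAvg W q) n) (T u)) }
      - ⨆ t : Fin n → θ, holevo pU (fun u => cqApply (nblock V t) (T u)) }

/-- The multi-letter quantity of the legal link at blocklength `n`:
`max_{U → A^n} inf_{B_q ∈ Conv((B_t))} χ(p_U; B_q^{⊗n})`. -/
def legalQuantity (W : θ → A → Matrix ι ι ℂ) (n : ℕ) : ℝ :=
  sSup { x : ℝ | ∃ (m : ℕ) (pU : Fin m → ℝ) (T : Fin m → (Fin n → A) → ℝ),
    IsDist pU ∧ (∀ u, IsDist (T u)) ∧
    x = sInf { y : ℝ | ∃ q : θ → ℝ, IsDist q ∧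
          y = holevo pU (fun u => cqApply (pblock (WtAvg W q) n) (T u)) } }

/-- Classical mutual information (base 2) of a joint distribution. -/
def mutualInfo {U B : Type*} [Fintype U] [Fintype B] (p : U → B → ℝ) : ℝ :=
  (∑ u, ∑ b, p u b * Real.log (p u b / ((∑ b', p u b') * (∑ u', p u' b)))) /
    Real.log 2

/-- Achievable secrecy rate for a classic arbitrarily varying quantum wiretap
channel (classical legal channel, quantum wiretap channel). -/
def AchievableClassic {B : Type*} [Fintype B] [DecidableEq B]
    (Wc : θ → A → B → ℝ) (V : θ → A → Matrix ι' ι' ℂ) (R : ℝ) : Prop :=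
  0 ≤ R ∧ ∀ ε > (0:ℝ), ∀ δ > (0:ℝ), ∀ ζ > (0:ℝ), ∃ N : ℕ, ∀ n ≥ N,
    ∃ J : ℕ, 1 ≤ J ∧
    ∃ E : Fin J → (Fin n → A) → ℝ, ∃ D : Fin J → Finset (Fin n → B),
      IsEncoder E ∧ (∀ j j', j ≠ j' → Disjoint (D j) (D j')) ∧
      Real.logb 2 J / n > R - δ ∧
      (∀ t : Fin n → θ,
        (J : ℝ)⁻¹ * ∑ j, ∑ a : Fin n → A,
          E j a * ∑ b ∈ (D j)ᶜ, ∏ i, Wc (t i) (a i) (b i) ≤ ε) ∧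
      (∀ t : Fin n → θ, holevo (uniformDist J) (wiretapOut V E t) < ζ)

/-- The secrecy capacity of a classic arbitrarily varying quantum wiretap channel. -/
def CsClassic {B : Type*} [Fintype B] [DecidableEq B]
    (Wc : θ → A → B → ℝ) (V : θ → A → Matrix ι' ι' ℂ) : ℝ :=
  sSup {R : ℝ | AchievableClassic Wc V R}

/-- The multi-letter secrecy quantity at blocklength `n` for the classic
arbitrarily varying quantum wiretap channel:
`max_{U → A^n} [ min_{q ∈ P(θ)} I(p_U; B̀_q^n) − max_{t^n} χ(p_U; Z_{t^n}) ]`. -/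
def secrecyQuantityC {B : Type*} [Fintype B]
    (Wc : θ → A → B → ℝ) (V : θ → A → Matrix ι' ι' ℂ) (n : ℕ) : ℝ :=
  sSup { x : ℝ | ∃ (m : ℕ) (pU : Fin m → ℝ) (T : Fin m → (Fin n → A) → ℝ),
    IsDist pU ∧ (∀ u, IsDist (T u)) ∧
    x = sInf { y : ℝ | ∃ q : θ → ℝ, IsDist q ∧
          y = mutualInfo (fun u (b : Fin n → B) =>
                pU u * ∑ a : Fin n → A, T u a * ∏ i, ∑ t, q t * Wc t (a i) (b i)) }
      - ⨆ t : Fin n → θ, holevo pU (fun u => cqApply (nblock V t) (T u)) }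

/-- The binary entropy function (base 2). -/
def binEntropy (ν : ℝ) : ℝ :=
  -(ν * Real.logb 2 ν) - (1 - ν) * Real.logb 2 (1 - ν)

/-- Membership in the `δ`-neighbourhood `C_δ` of the channel pair `(W, V)`. -/
def InCdelta (W W' : θ → A → Matrix ι ι ℂ) (V V' : θ → A → Matrix ι' ι' ℂ)
    (δ : ℝ) : Prop :=
  (∀ t a, traceNorm (W t a - W' t a) < δ) ∧ (∀ t a, traceNorm (V t a - V' t a) < δ)



section FannesAudenaertAux

open Real

lemma eta_nonneg {x : ℝ} (h0 : 0 ≤ x) (h1 : x ≤ 1) : 0 ≤ negMulLog x :=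
  Real.negMulLog_nonneg h0 h1

lemma eta_subadd {x y : ℝ} (hx : 0 ≤ x) (hy : 0 ≤ y) :
    negMulLog (x + y) ≤ negMulLog x + negMulLog y := by
  have key : ∀ a b : ℝ, 0 ≤ a → 0 ≤ b → -(a * Real.log (a + b)) ≤ negMulLog a := by
    intro a b ha hb
    rcases eq_or_lt_of_le ha with h | h
    · simp [← h, negMulLog]
    · have : Real.log a ≤ Real.log (a + b) := Real.log_le_log h (by linarith)
      simp only [negMulLog, neg_mul]
      nlinarith
  have h1 := key x y hx hy
  have h2 := key y x hy hx
  have : negMulLog (x + y) = -(x * Real.log (x + y)) + -(y * Real.log (y + x)) := by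
    rw [add_comm y x]; simp [negMulLog]; ring
  linarith

lemma eta_le_one_sub {x : ℝ} (h0 : 0 ≤ x) (h1 : x ≤ 1) : negMulLog x ≤ 1 - x := by
  rcases eq_or_lt_of_le h0 with h | h
  · simp [← h]
  · have hlog : Real.log x⁻¹ ≤ x⁻¹ - 1 := Real.log_le_sub_one_of_pos (by positivity)
    rw [Real.log_inv] at hlog
    simp only [negMulLog, neg_mul]
    have hx' : x * (-Real.log x) ≤ x * (x⁻¹ - 1) :=
      mul_le_mul_of_nonneg_left (by linarith) h0
    have : x * (x⁻¹ - 1) = 1 - x := by field_simp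
    nlinarith

lemma self_le_eta {e : ℝ} (h0 : 0 ≤ e) (h1 : e ≤ Real.exp (-1)) : e ≤ negMulLog e := by
  rcases eq_or_lt_of_le h0 with h | h
  · simp [← h]
  · have : Real.log e ≤ -1 := by
      calc Real.log e ≤ Real.log (Real.exp (-1)) := Real.log_le_log h h1
      _ = -1 := Real.log_exp _
    simp only [negMulLog, neg_mul]
    nlinarith

lemma eta_mono {x y : ℝ} (h0 : 0 ≤ x) (hxy : x ≤ y) (hy : y ≤ Real.exp (-1)) :
    negMulLog x ≤ negMulLog y := by
  have hmono : MonotoneOn negMulLog (Set.Icc 0 (Real.exp (-1))) := by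
    apply monotoneOn_of_deriv_nonneg (convex_Icc _ _)
      (Real.continuous_negMulLog.continuousOn)
    · intro z hz
      rw [interior_Icc] at hz
      exact (Real.differentiableAt_negMulLog (ne_of_gt hz.1)).differentiableWithinAt
    · intro z hz
      rw [interior_Icc] at hz
      rw [Real.deriv_negMulLog (ne_of_gt hz.1)]
      have : Real.log z ≤ -1 := by
        calc Real.log z ≤ Real.log (Real.exp (-1)) := Real.log_le_log hz.1 hz.2.le
        _ = -1 := Real.log_exp _
      linarith
  exact hmono ⟨h0, hxy.trans hy⟩ ⟨h0.trans hxy, hy⟩ hxy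

lemma abs_eta_sub_le' {x y : ℝ} (hx0 : 0 ≤ x) (hy1 : y ≤ 1) (hxy : x ≤ y)
    (he : y - x ≤ Real.exp (-1)) :
    |negMulLog x - negMulLog y| ≤ negMulLog (y - x) := by
  set e := y - x with hedef
  have he0 : 0 ≤ e := by simp [hedef]; linarith
  have hy0 : 0 ≤ y := by linarith
  have hx1 : x ≤ 1 := by linarith
  rw [abs_le]
  constructor
  · -- -(η x - η y) ≤ η e  i.e.  η y ≤ η x + η e
    have : negMulLog y ≤ negMulLog x + negMulLog e := by
      have := eta_subadd hx0 he0
      rwa [show x + e = y by simp [hedef]] at this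
    linarith
  · -- η x - η y ≤ η e : via η x - η y ≤ e ≤ η e
    have step1 : negMulLog x - negMulLog y ≤ e := by
      rcases eq_or_lt_of_le hx1 with h | h
      · have hxy1 : y = 1 := le_antisymm hy1 (h ▸ hxy)
        show negMulLog x - negMulLog y ≤ y - x
        rw [h, hxy1]; simp [negMulLog]
      · -- y = s*x + (1-s)*1 with s = (1-y)/(1-x)
        set s := (1 - y) / (1 - x) with hsdef
        have h1x : (0:ℝ) < 1 - x := by linarith
        have hs0 : 0 ≤ s := div_nonneg (by linarith) h1x.le
        have hs1 : s ≤ 1 := by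
          rw [hsdef, div_le_one h1x]; linarith
        have hcomb : s * x + (1 - s) * 1 = y := by
          have h' : s * (1 - x) = 1 - y := by rw [hsdef]; exact div_mul_cancel₀ _ h1x.ne'
          linarith
        have hconc := Real.concaveOn_negMulLog.2 (Set.mem_Ici.mpr hx0)
          (Set.mem_Ici.mpr (zero_le_one)) hs0 (by linarith) (by linarith : s + (1-s) = 1)
        simp only [smul_eq_mul] at hconc
        rw [hcomb] at hconc
        simp only [Real.negMulLog_one, mul_zero, add_zero] at hconc
        -- hconc : s * negMulLog x ≤ negMulLog y
        have hetax : negMulLog x ≤ 1 - x := eta_le_one_sub hx0 hx1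
        have h1s : 1 - s = e / (1 - x) := by
          rw [hsdef]; field_simp [hedef]; linarith [hedef]
        have : negMulLog x - negMulLog y ≤ (1 - s) * negMulLog x := by nlinarith
        have h2 : (1 - s) * negMulLog x ≤ e := by
          rw [h1s, div_mul_eq_mul_div, div_le_iff₀ h1x]
          have hη0 : 0 ≤ negMulLog x := eta_nonneg hx0 hx1
          nlinarith
        linarith
    exact step1.trans (self_le_eta he0 he)

lemma abs_eta_sub_le {x y : ℝ} (hx0 : 0 ≤ x) (hx1 : x ≤ 1) (hy0 : 0 ≤ y) (hy1 : y ≤ 1)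
    (he : |x - y| ≤ Real.exp (-1)) :
    |negMulLog x - negMulLog y| ≤ negMulLog |x - y| := by
  rcases le_total x y with h | h
  · have habs : |x - y| = y - x := by rw [abs_sub_comm]; exact abs_of_nonneg (by linarith)
    rw [habs] at he ⊢
    exact abs_eta_sub_le' hx0 hy1 h he
  · have habs : |x - y| = x - y := abs_of_nonneg (by linarith)
    rw [habs] at he ⊢
    rw [abs_sub_comm]
    exact abs_eta_sub_le' hy0 hx1 h he


lemma exp_neg_one_le : Real.exp (-1) ≤ 0.3678795 := by
  rw [Real.exp_neg]
  rw [inv_le_comm₀ (Real.exp_pos 1) (by norm_num)]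
  calc (0.3678795 : ℝ)⁻¹ ≤ 2.7182818283 := by norm_num
  _ ≤ Real.exp 1 := Real.exp_one_gt_d9.le

lemma key2 {μ : ℝ} (h0 : 0 ≤ μ) (h : μ ≤ Real.exp (-1)) :
    μ * Real.log 2 ≤ Real.negMulLog (1 - μ) := by
  have hμu : μ ≤ 0.3678795 := h.trans exp_neg_one_le
  set s := Real.sqrt (1 - μ) with hsdef
  have h1μ : (0:ℝ) < 1 - μ := by linarith
  have hs2 : s ^ 2 = 1 - μ := Real.sq_sqrt h1μ.le
  have hs0 : 0 < s := Real.sqrt_pos.mpr h1μ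
  have hs1 : s ≤ 1 := by
    rw [hsdef]; exact Real.sqrt_le_one.mpr (by linarith)
  have hlogs : Real.log s ≤ s - 1 := Real.log_le_sub_one_of_pos hs0
  have heta : 2 * s^2 * (1 - s) ≤ Real.negMulLog (1 - μ) := by
    have : Real.negMulLog (1 - μ) = -(s^2) * (2 * Real.log s) := by
      rw [Real.negMulLog, ← hs2, show s ^ 2 = s * s from sq s, Real.log_mul hs0.ne' hs0.ne']
      ring
    rw [this]
    nlinarith
  have hsl : (0.795 : ℝ) ≤ s := by nlinarith
  have hlog2 : Real.log 2 ≤ 0.6931472 := by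
    have := Real.log_two_lt_d9
    linarith
  have hlog2' : (0:ℝ) < Real.log 2 := Real.log_pos (by norm_num)
  have hμs : μ = (1 - s) * (1 + s) := by nlinarith
  have key : (1 + s) * Real.log 2 ≤ 2 * s^2 := by nlinarith
  calc μ * Real.log 2 = (1 - s) * ((1 + s) * Real.log 2) := by rw [hμs]; ring
  _ ≤ (1 - s) * (2 * s^2) := by
      apply mul_le_mul_of_nonneg_left key (by linarith)
  _ = 2 * s^2 * (1 - s) := by ring
  _ ≤ _ := heta

lemma entropy_le_log_card {ι : Type*} [Fintype ι] (t : ι → ℝ)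
    (h0 : ∀ i, 0 ≤ t i) (h1 : ∑ i, t i = 1) :
    ∑ i, Real.negMulLog (t i) ≤ Real.log (Fintype.card ι) := by
  have hd : 0 < Fintype.card ι := by
    by_contra h
    have : Fintype.card ι = 0 := by omega
    rw [Fintype.card_eq_zero_iff] at this
    simp [Finset.univ_eq_empty] at h1
  set d := Fintype.card ι with hddef
  have hjensen := Real.concaveOn_negMulLog.le_map_sum
    (t := Finset.univ) (w := fun _ : ι => (d:ℝ)⁻¹) (p := t)
    (fun i _ => by positivity)
    (by simp [Finset.sum_const, hddef]; field_simp; exact div_self (Nat.cast_ne_zero.mpr hd.ne'))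
    (fun i _ => Set.mem_Ici.mpr (h0 i))
  simp only [smul_eq_mul] at hjensen
  rw [← Finset.mul_sum, ← Finset.mul_sum, h1, mul_one] at hjensen
  have hη : Real.negMulLog ((d:ℝ)⁻¹) = (d:ℝ)⁻¹ * Real.log d := by
    rw [Real.negMulLog, Real.log_inv]; ring
  rw [hη] at hjensen
  have := mul_le_mul_of_nonneg_left hjensen (le_of_lt (by positivity : (0:ℝ) < (d:ℝ)))
  rw [← mul_assoc, ← mul_assoc, mul_inv_cancel₀ (by positivity : (d:ℝ) ≠ 0), one_mul, one_mul]
    at this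
  exact this


lemma exp_neg_one_lt_half : Real.exp (-1) < 1/2 :=
  lt_of_le_of_lt exp_neg_one_le (by norm_num)

lemma dist_le_one {ι : Type*} [Fintype ι] {p : ι → ℝ} (hp : IsDist p) (i : ι) : p i ≤ 1 := by
  rw [← hp.2]
  exact Finset.single_le_sum (fun j _ => hp.1 j) (Finset.mem_univ i)

lemma classical_bound {ι : Type*} [Fintype ι] (p q : ι → ℝ)
    (hp : IsDist p) (hq : IsDist q) {μ : ℝ}
    (hsum : ∑ i, |p i - q i| ≤ μ) (hμ : μ ≤ Real.exp (-1)) :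
    |∑ i, negMulLog (p i) - ∑ i, negMulLog (q i)| ≤
      μ * Real.log ((Fintype.card ι : ℝ) - 1) + negMulLog μ + negMulLog (1 - μ) := by
  have hμ0 : 0 ≤ μ :=
    le_trans (Finset.sum_nonneg fun i _ => abs_nonneg _) hsum
  have hμ1 : μ ≤ 1 := by
    have := exp_neg_one_lt_half; linarith
  set d := Fintype.card ι with hddef
  have hterm : ∀ i : ι, |p i - q i| ≤ μ := fun i =>
    le_trans (Finset.single_le_sum (fun j _ => abs_nonneg (p j - q j)) (Finset.mem_univ i)) hsum
  -- step 1
  have step1 : |∑ i, negMulLog (p i) - ∑ i, negMulLog (q i)| ≤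
      ∑ i, negMulLog |p i - q i| := by
    rw [← Finset.sum_sub_distrib]
    refine le_trans (Finset.abs_sum_le_sum_abs _ _) (Finset.sum_le_sum fun i _ => ?_)
    exact abs_eta_sub_le (hp.1 i) (dist_le_one hp i) (hq.1 i) (dist_le_one hq i)
      ((hterm i).trans hμ)
  -- step 2
  set ε := ∑ i, |p i - q i| with hεdef
  have hε0 : 0 ≤ ε := Finset.sum_nonneg fun i _ => abs_nonneg _
  have step2 : ∑ i, negMulLog |p i - q i| ≤ negMulLog ε + ε * Real.log d := by
    rcases eq_or_lt_of_le hε0 with h | h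
    · have hall : ∀ i ∈ Finset.univ, |p i - q i| = 0 := by
        intro i _
        have h2 := (Finset.sum_eq_zero_iff_of_nonneg
          (s := (Finset.univ : Finset ι)) (fun j _ => abs_nonneg (p j - q j))).mp h.symm
        exact h2 i (Finset.mem_univ i)
      rw [Finset.sum_congr rfl fun i hi => by rw [hall i hi]]
      simp [← h]
    · have hrw : ∀ i : ι, negMulLog |p i - q i| =
          (|p i - q i| / ε) * negMulLog ε + ε * negMulLog (|p i - q i| / ε) := by
        intro i
        have : |p i - q i| = ε * (|p i - q i| / ε) := by field_simp
        rw [show negMulLog |p i - q i| = negMulLog (ε * (|p i - q i| / ε)) by rw [← this],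
          Real.negMulLog_mul]
      calc ∑ i, negMulLog |p i - q i|
          = ∑ i, ((|p i - q i| / ε) * negMulLog ε + ε * negMulLog (|p i - q i| / ε)) :=
            Finset.sum_congr rfl fun i _ => hrw i
        _ = (∑ i, |p i - q i| / ε) * negMulLog ε + ε * ∑ i, negMulLog (|p i - q i| / ε) := by
            rw [Finset.sum_add_distrib, ← Finset.sum_mul, ← Finset.mul_sum]
        _ = negMulLog ε + ε * ∑ i, negMulLog (|p i - q i| / ε) := by
            rw [← Finset.sum_div, ← hεdef, div_self h.ne', one_mul]
        _ ≤ negMulLog ε + ε * Real.log d := by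
            have hlog := entropy_le_log_card (fun i => |p i - q i| / ε)
              (fun i => by positivity) (by rw [← Finset.sum_div, ← hεdef, div_self h.ne'])
            exact add_le_add_right (mul_le_mul_of_nonneg_left hlog hε0) _
  -- d ≥ 1
  have hd1 : 1 ≤ d := by
    by_contra h
    have : d = 0 := by omega
    rw [hddef, Fintype.card_eq_zero_iff] at this
    have := hp.2
    simp [Finset.univ_eq_empty] at this
  have hlogd0 : (0:ℝ) ≤ Real.log d :=
    Real.log_nonneg (by exact_mod_cast hd1)
  -- step 3 : monotone in ε
  have step3 : negMulLog ε + ε * Real.log d ≤ negMulLog μ + μ * Real.log d := by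
    have h1 : negMulLog ε ≤ negMulLog μ := eta_mono hε0 hsum hμ
    have h2 : ε * Real.log d ≤ μ * Real.log d :=
      mul_le_mul_of_nonneg_right hsum hlogd0
    linarith
  -- step 4
  have hη1μ : (1 - μ) * μ ≤ negMulLog (1 - μ) := by
    have h1μ : (0:ℝ) < 1 - μ := by have := exp_neg_one_lt_half; linarith
    have hlog : Real.log (1 - μ) ≤ -μ := by
      have := Real.log_le_sub_one_of_pos h1μ; linarith
    rw [Real.negMulLog]
    nlinarith
  have step4 : μ * Real.log d ≤ μ * Real.log ((d:ℝ) - 1) + negMulLog (1 - μ) := by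
    rcases Nat.lt_or_ge d 2 with hd | hd
    · -- d = 1
      have : d = 1 := by omega
      rw [this]
      simp only [Nat.cast_one, Real.log_one, mul_zero, sub_self, Real.log_zero, zero_add]
      have h1μ : (0:ℝ) < 1 - μ := by have := exp_neg_one_lt_half; linarith
      have := eta_nonneg (le_of_lt h1μ) (by linarith : 1 - μ ≤ 1)
      linarith
    rcases Nat.lt_or_ge d 3 with hd2 | hd3
    · -- d = 2
      have : d = 2 := by omega
      rw [this]
      have := key2 hμ0 hμ
      norm_num
      linarith
    · -- d ≥ 3
      have hd3' : (3:ℝ) ≤ (d:ℝ) := by exact_mod_cast hd3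
      have hdm1 : (0:ℝ) < (d:ℝ) - 1 := by linarith
      have hlogdiff : Real.log d - Real.log ((d:ℝ) - 1) ≤ 1 / ((d:ℝ) - 1) := by
        have hgt : (0:ℝ) < (d:ℝ) / ((d:ℝ) - 1) := by positivity
        have := Real.log_le_sub_one_of_pos hgt
        rw [Real.log_div (by linarith : (d:ℝ) ≠ 0) hdm1.ne'] at this
        have heq : (d:ℝ) / ((d:ℝ) - 1) - 1 = 1 / ((d:ℝ) - 1) := by field_simp; ring
        linarith [heq ▸ this]
      have hhalf : 1 / ((d:ℝ) - 1) ≤ 1 / 2 := by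
        rw [div_le_div_iff₀ hdm1 (by norm_num)]; linarith
      have hμhalf : μ ≤ 1/2 := le_of_lt (lt_of_le_of_lt hμ exp_neg_one_lt_half)
      have : μ * (Real.log d - Real.log ((d:ℝ) - 1)) ≤ (1 - μ) * μ := by
        calc μ * (Real.log d - Real.log ((d:ℝ) - 1)) ≤ μ * (1/2) :=
              mul_le_mul_of_nonneg_left (hlogdiff.trans hhalf) hμ0
        _ ≤ (1 - μ) * μ := by nlinarith
      linarith [hη1μ]
  calc |∑ i, negMulLog (p i) - ∑ i, negMulLog (q i)|
      ≤ ∑ i, negMulLog |p i - q i| := step1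
    _ ≤ negMulLog ε + ε * Real.log d := step2
    _ ≤ negMulLog μ + μ * Real.log d := step3
    _ ≤ negMulLog μ + (μ * Real.log ((d:ℝ) - 1) + negMulLog (1 - μ)) :=
        add_le_add_right step4 _
    _ = μ * Real.log ((Fintype.card ι : ℝ) - 1) + negMulLog μ + negMulLog (1 - μ) := by
        rw [hddef]; ring



variable {ιa : Type*} [Fintype ιa] [DecidableEq ιa]

lemma unitary_row_sum {W : Matrix ι ι ℂ} (hW : W ∈ Matrix.unitaryGroup ι ℂ) (i : ι) :
    ∑ j, Complex.normSq (W i j) = 1 := by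
  have h := Matrix.mem_unitaryGroup_iff.mp hW
  have h2 := congrFun (congrFun h i) i
  rw [Matrix.one_apply_eq] at h2
  have : ∑ j, (Complex.normSq (W i j) : ℂ) = 1 := by
    rw [← h2]
    simp only [Matrix.mul_apply, Matrix.star_eq_conjTranspose, Matrix.conjTranspose_apply]
    exact Finset.sum_congr rfl fun j _ => by rw [← Complex.mul_conj]; rfl
  have := congrArg Complex.re this
  simpa using this

lemma unitary_col_sum {W : Matrix ι ι ℂ} (hW : W ∈ Matrix.unitaryGroup ι ℂ) (j : ι) :
    ∑ i, Complex.normSq (W i j) = 1 := by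
  have h := Matrix.mem_unitaryGroup_iff'.mp hW
  have h2 := congrFun (congrFun h j) j
  rw [Matrix.one_apply_eq] at h2
  have : ∑ i, (Complex.normSq (W i j) : ℂ) = 1 := by
    rw [← h2]
    simp only [Matrix.mul_apply, Matrix.star_eq_conjTranspose, Matrix.conjTranspose_apply]
    exact Finset.sum_congr rfl fun i _ => by
      rw [mul_comm, ← Complex.mul_conj]; rfl
  have := congrArg Complex.re this
  simpa using this

lemma trace_unitary_conj {U : Matrix ι ι ℂ} (hU : U ∈ Matrix.unitaryGroup ι ℂ) (v : ι → ℂ) :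
    (U * Matrix.diagonal v * star U).trace = ∑ i, v i := by
  rw [Matrix.trace_mul_cycle,
    Matrix.mem_unitaryGroup_iff'.mp hU, Matrix.one_mul, Matrix.trace_diagonal]

lemma conj_diag_apply (W : Matrix ι ι ℂ) (v : ι → ℝ) (i : ι) :
    (W * Matrix.diagonal (fun k => (v k : ℂ)) * star W) i i
      = ((∑ j, v j * Complex.normSq (W i j) : ℝ) : ℂ) := by
  rw [Matrix.star_eq_conjTranspose, Matrix.mul_apply]
  push_cast
  refine Finset.sum_congr rfl fun j _ => ?_
  rw [Matrix.mul_diagonal, Matrix.conjTranspose_apply, Complex.star_def,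
    mul_comm (W i j) _, mul_assoc, Complex.mul_conj]


lemma conj_diag_mul {U : Matrix ι ι ℂ} (hU : U ∈ Matrix.unitaryGroup ι ℂ) (a b : ι → ℂ) :
    (U * Matrix.diagonal a * star U) * (U * Matrix.diagonal b * star U)
      = U * Matrix.diagonal (a * b) * star U := by
  have h1 : star U * U = 1 := Matrix.mem_unitaryGroup_iff'.mp hU
  simp only [Matrix.mul_assoc]
  rw [← Matrix.mul_assoc (star U) U (Matrix.diagonal b * star U), h1, Matrix.one_mul,
    ← Matrix.mul_assoc (Matrix.diagonal a) (Matrix.diagonal b) (star U),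
    Matrix.diagonal_mul_diagonal]
  rfl

lemma conj_herm_diag (M : Matrix ι ι ℂ) (hM : M.IsHermitian) {U : Matrix ι ι ℂ}
    (hU : U ∈ Matrix.unitaryGroup ι ℂ) :
    ∃ W ∈ Matrix.unitaryGroup ι ℂ, ∀ i,
      (star U * M * U) i i
        = ((∑ j, hM.eigenvalues j * Complex.normSq (W i j) : ℝ) : ℂ) := by
  set V := (Matrix.IsHermitian.eigenvectorUnitary hM : Matrix ι ι ℂ) with hVdef
  have hV : V ∈ Matrix.unitaryGroup ι ℂ := (Matrix.IsHermitian.eigenvectorUnitary hM).2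
  refine ⟨star U * V, mul_mem (Unitary.star_mem hU) hV, fun i => ?_⟩
  have hdiag : Matrix.diagonal (RCLike.ofReal ∘ hM.eigenvalues)
      = Matrix.diagonal (fun k => ((hM.eigenvalues k : ℝ) : ℂ)) := rfl
  have hrep : star U * M * U
      = (star U * V) * Matrix.diagonal (fun k => ((hM.eigenvalues k : ℝ) : ℂ))
        * star (star U * V) := by
    conv_lhs => rw [hM.spectral_theorem, Unitary.conjStarAlgAut_apply]
    rw [StarMul.star_mul, star_star, hdiag]
    simp only [Matrix.mul_assoc, hVdef]
  rw [hrep, conj_diag_apply]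

open scoped MatrixOrder

lemma traceNorm_herm (M : Matrix ι ι ℂ) (hM : M.IsHermitian) :
    traceNorm M = ∑ i, |hM.eigenvalues i| := by
  have hN : (M * Mᴴ).PosSemidef := Matrix.posSemidef_self_mul_conjTranspose M
  set V := (Matrix.IsHermitian.eigenvectorUnitary hM : Matrix ι ι ℂ) with hVdef
  have hV : V ∈ Matrix.unitaryGroup ι ℂ := (Matrix.IsHermitian.eigenvectorUnitary hM).2
  set P := V * Matrix.diagonal (fun k => ((|hM.eigenvalues k| : ℝ) : ℂ)) * star V with hPdef
  have hPpsd : P.PosSemidef := by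
    rw [hPdef, Matrix.star_eq_conjTranspose]
    exact (Matrix.posSemidef_diagonal_iff.mpr fun k =>
      Complex.zero_le_real.mpr (abs_nonneg _)).mul_mul_conjTranspose_same V
  have hdiag : Matrix.diagonal (RCLike.ofReal ∘ hM.eigenvalues)
      = Matrix.diagonal (fun k => ((hM.eigenvalues k : ℝ) : ℂ)) := rfl
  have hPsq : P ^ 2 = M * Mᴴ := by
    rw [Matrix.IsHermitian.eq hM, pow_two, hPdef, conj_diag_mul hV]
    conv_rhs => rw [hM.spectral_theorem, Unitary.conjStarAlgAut_apply, hdiag]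
    rw [conj_diag_mul hV]
    have hfun : ((fun k => ((|hM.eigenvalues k| : ℝ) : ℂ)) * fun k => ((|hM.eigenvalues k| : ℝ) : ℂ))
        = ((fun k => ((hM.eigenvalues k : ℝ) : ℂ)) * fun k => ((hM.eigenvalues k : ℝ) : ℂ)) := by
      funext k
      show ((|hM.eigenvalues k| : ℝ) : ℂ) * ((|hM.eigenvalues k| : ℝ) : ℂ)
        = ((hM.eigenvalues k : ℝ) : ℂ) * ((hM.eigenvalues k : ℝ) : ℂ)
      rw [← Complex.ofReal_mul, ← Complex.ofReal_mul, abs_mul_abs_self]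
    rw [hfun]
  have hPeq : P = CFC.sqrt (M * Mᴴ) := by
    open scoped MatrixOrder in
    exact ((CFC.sqrt_eq_iff (M * Mᴴ) P hN.nonneg hPpsd.nonneg).mpr (by rw [← hPsq, pow_two])).symm
  have t1 : P.trace = ((∑ i, |hM.eigenvalues i| : ℝ) : ℂ) := by
    rw [hPdef, trace_unitary_conj hV, Complex.ofReal_sum]
  have t2 : (CFC.sqrt (M * Mᴴ)).trace = ((∑ i, Real.sqrt (hN.1.eigenvalues i) : ℝ) : ℂ) := by
    open scoped MatrixOrder in
    rw [CFC.sqrt_eq_cfc, cfc_nnreal_eq_real _ _ hN.nonneg, hN.1.cfc_eq, IsHermitian.cfc,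
      Unitary.conjStarAlgAut_apply, trace_unitary_conj (hN.1.eigenvectorUnitary).2,
      Complex.ofReal_sum]
    simp [max_eq_left (hN.eigenvalues_nonneg _)]
  have key : ∑ i, Real.sqrt (hN.1.eigenvalues i) = ∑ i, |hM.eigenvalues i| := by
    have := t1.symm.trans (congrArg Matrix.trace hPeq |>.trans t2)
    exact_mod_cast this.symm
  rw [← key]
  rfl


lemma sum_eigenvalues_eq_trace {ιa : Type*} [Fintype ιa] [DecidableEq ιa]
    (M : Matrix ιa ιa ℂ) (hM : M.IsHermitian) :
    ((∑ i, hM.eigenvalues i : ℝ) : ℂ) = M.trace := by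
  conv_rhs => rw [hM.spectral_theorem, Unitary.conjStarAlgAut_apply]
  rw [trace_unitary_conj (Matrix.IsHermitian.eigenvectorUnitary hM).2, Complex.ofReal_sum]
  rfl

lemma traceNorm_congr {ιa : Type*} [Fintype ιa] [DecidableEq ιa]
    {A B : Matrix ιa ιa ℂ} (h : A * Aᴴ = B * Bᴴ) : traceNorm A = traceNorm B := by
  unfold traceNorm
  have key : ∀ (N₁ N₂ : Matrix ιa ιa ℂ) (h₁ : N₁.IsHermitian) (h₂ : N₂.IsHermitian), N₁ = N₂ →
      ∑ i, Real.sqrt (h₁.eigenvalues i) = ∑ i, Real.sqrt (h₂.eigenvalues i) := by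
    rintro N₁ N₂ h₁ h₂ rfl
    rfl
  exact key _ _ _ _ h

lemma one_sided {ιa : Type*} [Fintype ιa] [DecidableEq ιa]
    (Φ Ψ : Matrix ιa ιa ℂ) (hΦ : IsDensity Φ) (hΨ : IsDensity Ψ) {μ : ℝ}
    (h₁ : traceNorm (Φ - Ψ) ≤ μ) (hμ : μ ≤ Real.exp (-1)) :
    vnEntropy Φ - vnEntropy Ψ ≤
      (μ * Real.log ((Fintype.card ιa : ℝ) - 1) + Real.negMulLog μ
        + Real.negMulLog (1 - μ)) / Real.log 2 := by
  classical
  have hΦH : Φ.IsHermitian := hΦ.1.1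
  have hΨH : Ψ.IsHermitian := hΨ.1.1
  set U := (Matrix.IsHermitian.eigenvectorUnitary hΨH : Matrix ιa ιa ℂ) with hUdef
  have hU : U ∈ Matrix.unitaryGroup ιa ℂ := (Matrix.IsHermitian.eigenvectorUnitary hΨH).2
  have hMH : (Φ - Ψ).IsHermitian := hΦH.sub hΨH
  obtain ⟨W, hW, hWrep⟩ := conj_herm_diag Φ hΦH hU
  obtain ⟨W', hW', hW'rep⟩ := conj_herm_diag (Φ - Ψ) hMH hU
  set lam := hΦH.eigenvalues with hlam
  set q := hΨH.eigenvalues with hqq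
  set p : ιa → ℝ := fun i => ∑ j, lam j * Complex.normSq (W i j) with hpdef
  have hlam0 : ∀ j, 0 ≤ lam j := fun j => hΦ.1.eigenvalues_nonneg j
  have hq0 : ∀ j, 0 ≤ q j := fun j => hΨ.1.eigenvalues_nonneg j
  have hlamsum : ∑ j, lam j = 1 := by
    have := sum_eigenvalues_eq_trace Φ hΦH
    rw [hΦ.2] at this
    exact_mod_cast this
  have hqsum : ∑ j, q j = 1 := by
    have := sum_eigenvalues_eq_trace Ψ hΨH
    rw [hΨ.2] at this
    exact_mod_cast this
  have hp0 : ∀ i, 0 ≤ p i := fun i =>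
    Finset.sum_nonneg fun j _ => mul_nonneg (hlam0 j) (Complex.normSq_nonneg _)
  have hpsum : ∑ i, p i = 1 := by
    rw [hpdef, Finset.sum_comm]
    calc ∑ j, ∑ i, lam j * Complex.normSq (W i j)
        = ∑ j, lam j * ∑ i, Complex.normSq (W i j) :=
          Finset.sum_congr rfl fun j _ => by rw [Finset.mul_sum]
      _ = ∑ j, lam j := Finset.sum_congr rfl fun j _ => by
          rw [unitary_col_sum hW j, mul_one]
      _ = 1 := hlamsum
  have hpdist : IsDist p := ⟨hp0, hpsum⟩
  have hqdist : IsDist q := ⟨hq0, hqsum⟩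
  have hjensen : ∑ j, Real.negMulLog (lam j) ≤ ∑ i, Real.negMulLog (p i) := by
    have hstep : ∀ i, ∑ j, Complex.normSq (W i j) * Real.negMulLog (lam j)
        ≤ Real.negMulLog (p i) := by
      intro i
      have h := Real.concaveOn_negMulLog.le_map_sum
        (t := Finset.univ) (w := fun j => Complex.normSq (W i j)) (p := lam)
        (fun j _ => Complex.normSq_nonneg _)
        (unitary_row_sum hW i)
        (fun j _ => Set.mem_Ici.mpr (hlam0 j))
      simp only [smul_eq_mul] at h
      refine h.trans_eq ?_
      congr 1
      rw [hpdef]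
      exact Finset.sum_congr rfl fun j _ => mul_comm _ _
    calc ∑ j, Real.negMulLog (lam j)
        = ∑ j, (∑ i, Complex.normSq (W i j)) * Real.negMulLog (lam j) := by
          refine Finset.sum_congr rfl fun j _ => ?_
          rw [unitary_col_sum hW j, one_mul]
      _ = ∑ i, ∑ j, Complex.normSq (W i j) * Real.negMulLog (lam j) := by
          rw [Finset.sum_comm]
          exact Finset.sum_congr rfl fun j _ => by rw [Finset.sum_mul]
      _ ≤ ∑ i, Real.negMulLog (p i) := Finset.sum_le_sum fun i _ => hstep i
  have hdiagq : ∀ i, (star U * Ψ * U) i i = ((q i : ℝ) : ℂ) := by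
    intro i
    have hd : star U * Ψ * U = Matrix.diagonal (fun k => ((q k : ℝ) : ℂ)) := by
      conv_lhs => rw [hΨH.spectral_theorem, Unitary.conjStarAlgAut_apply]
      have h1 : star U * U = 1 := Matrix.mem_unitaryGroup_iff'.mp hU
      calc star U * (U * Matrix.diagonal (RCLike.ofReal ∘ q) * star U) * U
          = (star U * U) * Matrix.diagonal (RCLike.ofReal ∘ q) * (star U * U) := by
            simp only [Matrix.mul_assoc]
        _ = Matrix.diagonal (fun k => ((q k : ℝ) : ℂ)) := by
            rw [h1, Matrix.one_mul, Matrix.mul_one]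
            rfl
    rw [hd, Matrix.diagonal_apply_eq]
  have hsub : ∀ i, p i - q i = ∑ j, hMH.eigenvalues j * Complex.normSq (W' i j) := by
    intro i
    have hexp : (star U * (Φ - Ψ) * U) i i = ((p i - q i : ℝ) : ℂ) := by
      rw [Matrix.mul_sub, Matrix.sub_mul, Matrix.sub_apply, hWrep i, hdiagq i]
      have hpi : p i = ∑ j, lam j * Complex.normSq (W i j) := rfl
      rw [hpi]
      push_cast
      ring
    have hcast := (hW'rep i).symm.trans hexp
    exact_mod_cast hcast.symm
  have htn : traceNorm (Φ - Ψ) = ∑ j, |hMH.eigenvalues j| := traceNorm_herm _ hMH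
  have hsumabs : ∑ i, |p i - q i| ≤ μ := by
    have hstep : ∀ i, |p i - q i| ≤ ∑ j, |hMH.eigenvalues j| * Complex.normSq (W' i j) := by
      intro i
      rw [hsub i]
      refine (Finset.abs_sum_le_sum_abs _ _).trans ?_
      refine Finset.sum_le_sum fun j _ => ?_
      rw [abs_mul, abs_of_nonneg (Complex.normSq_nonneg _)]
    calc ∑ i, |p i - q i| ≤ ∑ i, ∑ j, |hMH.eigenvalues j| * Complex.normSq (W' i j) :=
          Finset.sum_le_sum fun i _ => hstep i
      _ = ∑ j, ∑ i, |hMH.eigenvalues j| * Complex.normSq (W' i j) := Finset.sum_comm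
      _ = ∑ j, |hMH.eigenvalues j| * ∑ i, Complex.normSq (W' i j) :=
          Finset.sum_congr rfl fun j _ => by rw [Finset.mul_sum]
      _ = ∑ j, |hMH.eigenvalues j| := Finset.sum_congr rfl fun j _ => by
          rw [unitary_col_sum hW' j, mul_one]
      _ = traceNorm (Φ - Ψ) := htn.symm
      _ ≤ μ := h₁
  have hcb := classical_bound p q hpdist hqdist hsumabs hμ
  have hEΦ : vnEntropy Φ = (∑ j, Real.negMulLog (lam j)) / Real.log 2 := by
    unfold vnEntropy
    rw [dif_pos hΦH]
  have hEΨ : vnEntropy Ψ = (∑ j, Real.negMulLog (q j)) / Real.log 2 := by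
    unfold vnEntropy
    rw [dif_pos hΨH]
  have hlog2 : (0:ℝ) < Real.log 2 := Real.log_pos (by norm_num)
  rw [hEΦ, hEΨ, div_sub_div_same]
  have hnum : (∑ j, Real.negMulLog (lam j)) - (∑ j, Real.negMulLog (q j))
      ≤ μ * Real.log ((Fintype.card ιa : ℝ) - 1) + Real.negMulLog μ
        + Real.negMulLog (1 - μ) := by
    calc (∑ j, Real.negMulLog (lam j)) - (∑ j, Real.negMulLog (q j))
        ≤ (∑ i, Real.negMulLog (p i)) - (∑ j, Real.negMulLog (q j)) := by linarith
      _ ≤ |(∑ i, Real.negMulLog (p i)) - (∑ j, Real.negMulLog (q j))| := le_abs_self _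
      _ ≤ _ := hcb
  have hmul := mul_le_mul_of_nonneg_right hnum (le_of_lt (inv_pos.mpr hlog2))
  simpa [div_eq_mul_inv] using hmul

end FannesAudenaertAux

/-- Fannes–Audenaert inequality:
`|S(Φ) − S(Ψ)| ≤ μ log₂(d−1) + h(μ)` whenever `‖Φ − Ψ‖₁ ≤ μ < 1/e`. -/
theorem fannes_audenaert
    (Φ Ψ : Matrix ι ι ℂ) (hΦ : IsDensity Φ) (hΨ : IsDensity Ψ) (μ : ℝ)
    (h₁ : traceNorm (Φ - Ψ) ≤ μ) (h₂ : μ < 1 / Real.exp 1) :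
    |vnEntropy Φ - vnEntropy Ψ| ≤
      μ * Real.logb 2 ((Fintype.card ι : ℝ) - 1) + binEntropy μ := by
  have hμe : μ ≤ Real.exp (-1) := by
    rw [Real.exp_neg]
    exact le_of_lt (by rwa [one_div] at h₂)
  have h1' : traceNorm (Ψ - Φ) ≤ μ := by
    have he : (Ψ - Φ) * (Ψ - Φ)ᴴ = (Φ - Ψ) * (Φ - Ψ)ᴴ := by
      have hneg : Ψ - Φ = -(Φ - Ψ) := (neg_sub _ _).symm
      rw [hneg, Matrix.conjTranspose_neg, Matrix.neg_mul, Matrix.mul_neg, neg_neg]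
    rw [traceNorm_congr he]
    exact h₁
  have hA := one_sided Φ Ψ hΦ hΨ h₁ hμe
  have hB := one_sided Ψ Φ hΨ hΦ h1' hμe
  have hlog2 : (0:ℝ) < Real.log 2 := Real.log_pos (by norm_num)
  have hrhs : (μ * Real.log ((Fintype.card ι : ℝ) - 1) + Real.negMulLog μ
      + Real.negMulLog (1 - μ)) / Real.log 2
      = μ * Real.logb 2 ((Fintype.card ι : ℝ) - 1) + binEntropy μ := by
    rw [binEntropy, Real.logb, Real.logb, Real.logb, Real.negMulLog, Real.negMulLog]
    field_simp
    ring
  rw [abs_sub_le_iff]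
  constructor
  · rw [← hrhs]; exact hA
  · rw [← hrhs]; exact hB

end AVQW
end
end

section
/- Let {W_t : t ∈ θ} be an arbitrarily varying classical-quantum channel with input alphabet A and outputs in S(H), dim H = d. Let L_1, …, L_{d²+1} be positive-semidefinite Hermitian operators on H with ∑_{i=1}^{d²+1} L_i = id_H such that L_1, …, L_{d²} span the real vector space of Hermitian operators on H, and let D_1, D_2 be positive-semidefinite operators with D_1 + D_2 = id_H. Define the classical arbitrarily varying channel {Ẁ_t : t ∈ θ}, Ẁ_t : A → P({1,…,d²+3}), by Ẁ_t(i|a) := (1/2) tr(W_t(a) D_i) for i ∈ {1,2} and Ẁ_t(i|a) := (1/2) tr(W_t(a) L_{i−2}) for i ∈ {3,…,d²+3} (this is a valid channel since the outputs sum to 1). If {W_t : t ∈ θ} is not symmetrizable, then {Ẁ_t : t ∈ θ} is not symmetrizable. -/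
open scoped BigOperators Kronecker ComplexOrder
open Matrix Filter MeasureTheory

noncomputable section

namespace AVQW

variable {θ A ι ι' : Type*} [Fintype θ] [Fintype A] [Fintype ι] [DecidableEq ι]
  [Fintype ι'] [DecidableEq ι']

lemma aux_trace_self_mul_conjTranspose_eq_zero {n : Type*} [Fintype n] [DecidableEq n]
    (A : Matrix n n ℂ) (h : (A * Aᴴ).trace = 0) : A = 0 := by
  have h1 : ∑ i, ∑ j, (Complex.normSq (A i j) : ℝ) = 0 := by
    have : (A * Aᴴ).trace = ∑ i, ∑ j, (Complex.normSq (A i j) : ℂ) := by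
      simp [Matrix.trace, Matrix.mul_apply, Matrix.diag, Matrix.conjTranspose_apply,
        Complex.mul_conj]
    rw [this] at h
    exact_mod_cast h
  ext i j
  have := (Finset.sum_eq_zero_iff_of_nonneg (fun i _ =>
    Finset.sum_nonneg fun j _ => Complex.normSq_nonneg _)).1 h1 i (Finset.mem_univ i)
  have := (Finset.sum_eq_zero_iff_of_nonneg (fun j _ => Complex.normSq_nonneg _)).1
    this j (Finset.mem_univ j)
  simpa using Complex.normSq_eq_zero.1 this

lemma aux_trace_herm_mul_real {n : Type*} [Fintype n] [DecidableEq n]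
    {A B : Matrix n n ℂ} (hA : A.IsHermitian) (hB : B.IsHermitian) :
    ((A * B).trace).im = 0 := by
  have : star ((A * B).trace) = (A * B).trace := by
    rw [← Matrix.trace_conjTranspose, Matrix.conjTranspose_mul, hA.eq, hB.eq,
      Matrix.trace_mul_comm]
  rw [Complex.ext_iff] at this
  have := this.2
  simp only [Complex.star_def, Complex.conj_im] at this
  linarith

/-- the classical arbitrarily varying channel obtained from
`{W_t}` by measuring with the informationally complete family
`D_1, D_2, L_1, …, L_{d²+1}` (output alphabet `{1,2} ⊕ {1,…,d²+1}`) is not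
symmetrizable whenever `{W_t}` is not symmetrizable. -/
theorem measured_channel_not_symmetrizable
    {d : ℕ}
    (W : θ → A → Matrix (Fin d) (Fin d) ℂ) (hW : ∀ t a, IsDensity (W t a))
    (L : Fin (d ^ 2 + 1) → Matrix (Fin d) (Fin d) ℂ)
    (hLpsd : ∀ i, (L i).PosSemidef) (hLsum : ∑ i, L i = 1)
    (hLspan : ∀ H : Matrix (Fin d) (Fin d) ℂ, H.IsHermitian →
      H ∈ Submodule.span ℝ (Set.range fun i : Fin (d ^ 2) => L i.castSucc))
    (D : Fin 2 → Matrix (Fin d) (Fin d) ℂ) (hDpsd : ∀ j, (D j).PosSemidef)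
    (hDsum : D 0 + D 1 = 1)
    (hsym : ¬ Symmetrizable W) :
    ¬ SymmetrizableC (fun t a (i : Fin 2 ⊕ Fin (d ^ 2 + 1)) =>
        Sum.elim (fun j => (2 : ℝ)⁻¹ * ((W t a * D j).trace).re)
                 (fun k => (2 : ℝ)⁻¹ * ((W t a * L k).trace).re) i) := by
  intro hC
  apply hsym
  obtain ⟨τ, hτd, hτ⟩ := hC
  refine ⟨τ, hτd, fun a a' => ?_⟩
  set M : Matrix (Fin d) (Fin d) ℂ :=
    ∑ t, (τ a t : ℂ) • W t a' - ∑ t, (τ a' t : ℂ) • W t a with hMdef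
  suffices hM0 : M = 0 by exact sub_eq_zero.mp hM0
  have hWH : ∀ t b, (W t b).IsHermitian := fun t b => (hW t b).1.1
  have hMH : M.IsHermitian := by
    rw [Matrix.IsHermitian, hMdef]
    simp [Matrix.conjTranspose_sub, Matrix.conjTranspose_sum, Matrix.conjTranspose_smul,
      (hWH _ _).eq, Complex.star_def, Complex.conj_ofReal]
  have key : ∀ k, (M * L k).trace = 0 := by
    intro k
    have h1 := hτ a a' (Sum.inr k)
    simp only [Sum.elim_inr] at h1
    have e : ∀ (c f : θ → ℝ), ∑ t, c t * ((2:ℝ)⁻¹ * f t) = (2:ℝ)⁻¹ * ∑ t, c t * f t := by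
      intro c f; rw [Finset.mul_sum]; exact Finset.sum_congr rfl (by intros; ring)
    rw [e, e] at h1
    have h2 : ∑ t, τ a t * ((W t a' * L k).trace).re
        = ∑ t, τ a' t * ((W t a * L k).trace).re :=
      mul_left_cancel₀ (by norm_num : ((2:ℝ)⁻¹) ≠ 0) h1
    have hreal : ∀ t b, (W t b * L k).trace = (((W t b * L k).trace).re : ℂ) := by
      intro t b
      have him := aux_trace_herm_mul_real (hWH t b) (hLpsd k).1
      exact Complex.ext (by simp) (by simp [him])
    have htr : (M * L k).trace = ∑ t, (τ a t : ℂ) * (W t a' * L k).trace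
        - ∑ t, (τ a' t : ℂ) * (W t a * L k).trace := by
      rw [hMdef]
      simp [Matrix.sub_mul, Matrix.sum_mul, Matrix.smul_mul, Matrix.trace_sub,
        Matrix.trace_sum, Matrix.trace_smul, smul_eq_mul]
    have c1 : (∑ t, (τ a t : ℂ) * (W t a' * L k).trace)
        = ((∑ t, τ a t * ((W t a' * L k).trace).re : ℝ) : ℂ) := by
      push_cast
      exact Finset.sum_congr rfl fun t _ => by rw [← hreal t a']
    have c2 : (∑ t, (τ a' t : ℂ) * (W t a * L k).trace)
        = ((∑ t, τ a' t * ((W t a * L k).trace).re : ℝ) : ℂ) := by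
      push_cast
      exact Finset.sum_congr rfl fun t _ => by rw [← hreal t a]
    rw [htr, c1, c2, h2, sub_self]
  have hspan := hLspan M hMH
  have hMM : (M * M).trace = 0 := by
    refine Submodule.span_induction
      (p := fun X _ => (M * X).trace = 0) ?_ ?_ ?_ ?_ hspan
    · rintro X ⟨i, rfl⟩
      exact key i.castSucc
    · simp
    · intro X Y _ _ hX hY
      rw [Matrix.mul_add, Matrix.trace_add, hX, hY, add_zero]
    · intro r X _ hX
      rw [Matrix.mul_smul, Matrix.trace_smul, hX, smul_zero]
  apply aux_trace_self_mul_conjTranspose_eq_zero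
  rw [hMH.eq, hMM]


end AVQW
end
end

section
/- Let {W_t : t ∈ θ} be an arbitrarily varying classical-quantum channel with input alphabet A, and let T : A → P(A) be a classical channel (after identifying the auxiliary alphabet U with A). For n > 1 define the classical channel T̃^n : A^n → P(A^n) by T̃^n(a_1,…,a_{n−1},a_n) := T^{n−1}(a_1,…,a_{n−1}) · δ_{a_n}, i.e., T̃^n = T^{n−1} × id_A, so that W_{t^n} ∘ T̃^n (a_1,…,a_n) = (W_{t^{n−1}} ∘ T^{n−1})(a_1,…,a_{n−1}) ⊗ W_{t_n}(a_n). If {W_t : t ∈ θ} is not symmetrizable, then the arbitrarily varying classical-quantum channel {W_{t^n} ∘ T̃^n : t^n ∈ θ^n} with input alphabet A^n and state set θ^n is not symmetrizable. -/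
open scoped BigOperators Kronecker ComplexOrder
open Matrix Filter MeasureTheory

noncomputable section

namespace AVQW

variable {θ A ι ι' : Type*} [Fintype θ] [Fintype A] [Fintype ι] [DecidableEq ι]
  [Fintype ι'] [DecidableEq ι']

lemma sum_snoc_aux {X M : Type*} [Fintype X] [AddCommMonoid M] {m : ℕ}
    (F : (Fin (m+1) → X) → M) :
    ∑ f : Fin (m+1) → X, F f = ∑ x : X, ∑ g : Fin m → X, F (Fin.snoc g x) := by
  rw [← Equiv.sum_comp (Fin.snocEquiv (fun _ => X)) F, Fintype.sum_prod_type]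
  rfl

lemma prod_diag_sum {ι : Type*} [Fintype ι] {m : ℕ}
    (M : Fin m → Matrix ι ι ℂ) :
    ∑ g : Fin m → ι, ∏ j, M j (g j) (g j) = ∏ j, (M j).trace := by
  have : ∏ j, (M j).trace = ∏ j : Fin m, ∑ i : ι, M j i i := by
    simp [Matrix.trace, Matrix.diag]
  rw [this, Fintype.prod_sum]

lemma sum_prod_coe {A : Type*} [Fintype A] {m : ℕ} (T : A → ℝ) (hT : ∑ b, T b = 1) :
    ∑ b : Fin m → A, ((∏ j, T (b j) : ℝ) : ℂ) = 1 := by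
  have h : ∀ b : Fin m → A, ((∏ j, T (b j) : ℝ) : ℂ) = ∏ j, ((T (b j) : ℝ) : ℂ) := by
    intro b; push_cast; ring
  simp_rw [h]
  rw [← Fintype.prod_sum (fun _ : Fin m => fun β : A => ((T β : ℝ) : ℂ))]
  have h2 : ∑ β : A, ((T β : ℝ) : ℂ) = 1 := by
    rw [← Complex.ofReal_sum, hT, Complex.ofReal_one]
  simp [h2]

lemma block_entry_sum {θ A ι : Type*} [Fintype θ] [Fintype A] [Fintype ι]
    [DecidableEq ι] [DecidableEq A] {m : ℕ}
    (W : θ → A → Matrix ι ι ℂ) (hW : ∀ t a, IsDensity (W t a))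
    (T : A → A → ℝ) (hT : ∀ a, IsDist (T a)) (a₀ : A)
    (t : Fin (m+1) → θ) (a' : A) (x y : ι) :
    ∑ g : Fin m → ι,
      (∑ b : Fin (m+1) → A,
        ((∏ i : Fin (m+1), if (i : ℕ) + 1 = m + 1 then
            (if b i = (Fin.snoc (fun _ : Fin m => a₀) a' : Fin (m+1) → A) i then (1:ℝ) else 0)
          else T ((Fin.snoc (fun _ : Fin m => a₀) a' : Fin (m+1) → A) i) (b i) : ℝ) : ℂ) • nblock W t b)
        (Fin.snoc g x) (Fin.snoc g y)
    = W (t (Fin.last m)) a' x y := by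
  have hco : ∀ (b' : Fin m → A) (β : A),
      (∏ i : Fin (m+1), if (i : ℕ) + 1 = m + 1 then
          (if (Fin.snoc b' β : Fin (m+1) → A) i = (Fin.snoc (fun _ : Fin m => a₀) a' : Fin (m+1) → A) i then (1:ℝ) else 0)
        else T ((Fin.snoc (fun _ : Fin m => a₀) a' : Fin (m+1) → A) i) ((Fin.snoc b' β : Fin (m+1) → A) i))
      = (if β = a' then 1 else 0) * ∏ j : Fin m, T a₀ (b' j) := by
    intro b' β
    rw [Fin.prod_univ_castSucc]
    simp only [Fin.snoc_castSucc, Fin.snoc_last, Fin.coe_castSucc, Fin.val_last]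
    rw [if_pos trivial, mul_comm]
    congr 1
    refine Finset.prod_congr rfl fun j _ => ?_
    rw [if_neg (by omega)]
  have hnb : ∀ (b' : Fin m → A) (β : A) (g : Fin m → ι),
      nblock W t (Fin.snoc b' β : Fin (m+1) → A) (Fin.snoc g x) (Fin.snoc g y)
      = (∏ j, W (t (Fin.castSucc j)) (b' j) (g j) (g j)) * W (t (Fin.last m)) β x y := by
    intro b' β g
    simp [nblock, Fin.prod_univ_castSucc]
  simp only [Matrix.sum_apply, Matrix.smul_apply, smul_eq_mul]
  rw [Finset.sum_comm]
  rw [sum_snoc_aux]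
  simp_rw [hco, hnb, Complex.ofReal_mul, mul_assoc]
  simp_rw [← Finset.mul_sum]
  simp only [apply_ite (fun r : ℝ => (r : ℂ)), Complex.ofReal_one, Complex.ofReal_zero,
    ite_mul, one_mul, zero_mul, Finset.sum_ite_eq', Finset.mem_univ, if_true]
  have h2 : ∀ b' : Fin m → A,
      ∑ g : Fin m → ι, ∏ j, W (t (Fin.castSucc j)) (b' j) (g j) (g j) = 1 := by
    intro b'
    rw [prod_diag_sum]
    exact Finset.prod_eq_one fun j _ => (hW _ _).2
  simp_rw [← Finset.sum_mul, h2, one_mul]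
  rw [← Finset.sum_mul, sum_prod_coe (T a₀) (hT a₀).2, one_mul]

def ptr {ι : Type*} [Fintype ι] {m : ℕ}
    (M : Matrix (Fin (m+1) → ι) (Fin (m+1) → ι) ℂ) : Matrix ι ι ℂ :=
  Matrix.of fun x y => ∑ g : Fin m → ι, M (Fin.snoc g x) (Fin.snoc g y)

lemma ptr_sum {ι κ : Type*} [Fintype ι] [Fintype κ] {m : ℕ}
    (c : κ → ℂ) (M : κ → Matrix (Fin (m+1) → ι) (Fin (m+1) → ι) ℂ) :
    ptr (∑ i, c i • M i) = ∑ i, c i • ptr (M i) := by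
  ext x y
  simp only [ptr, Matrix.of_apply, Matrix.sum_apply, Matrix.smul_apply, smul_eq_mul,
    Finset.mul_sum]
  rw [Finset.sum_comm]

lemma ptr_block {θ A ι : Type*} [Fintype θ] [Fintype A] [Fintype ι]
    [DecidableEq ι] [DecidableEq A] {m : ℕ}
    (W : θ → A → Matrix ι ι ℂ) (hW : ∀ t a, IsDensity (W t a))
    (T : A → A → ℝ) (hT : ∀ a, IsDist (T a)) (a₀ : A)
    (t : Fin (m+1) → θ) (a' : A) :
    ptr (∑ b : Fin (m+1) → A,
        ((∏ i : Fin (m+1), if (i : ℕ) + 1 = m + 1 then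
            (if b i = (Fin.snoc (fun _ : Fin m => a₀) a' : Fin (m+1) → A) i then (1:ℝ) else 0)
          else T ((Fin.snoc (fun _ : Fin m => a₀) a' : Fin (m+1) → A) i) (b i) : ℝ) : ℂ) • nblock W t b)
      = W (t (Fin.last m)) a' := by
  ext x y
  exact block_entry_sum W hW T hT a₀ t a' x y


/-- if `{W_t}` is not symmetrizable, then the `n`-block channel
pre-coded with `T̃^n = T^{n−1} × id_A` (identity in the last letter) is not
symmetrizable either. -/
theorem precoded_not_symmetrizable
    [DecidableEq A]
    (W : θ → A → Matrix ι ι ℂ) (hW : ∀ t a, IsDensity (W t a))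
    (T : A → A → ℝ) (hT : ∀ a, IsDist (T a))
    (hsym : ¬ Symmetrizable W) (n : ℕ) (hn : 1 < n) :
    ¬ Symmetrizable (fun (t : Fin n → θ) (a : Fin n → A) =>
        ∑ b : Fin n → A,
          ((∏ i : Fin n, if (i : ℕ) + 1 = n then (if b i = a i then (1:ℝ) else 0)
              else T (a i) (b i) : ℝ) : ℂ) • nblock W t b) := by
  obtain ⟨m, rfl⟩ : ∃ m, n = m + 1 := ⟨n - 1, by omega⟩
  intro hbig
  apply hsym
  by_cases hA : Nonempty A
  swap
  · exact ⟨fun _ _ => 0, fun a => absurd ⟨a⟩ hA, fun a => absurd ⟨a⟩ hA⟩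
  obtain ⟨a₀⟩ := hA
  obtain ⟨τ, hτd, hτs⟩ := hbig
  refine ⟨fun a s => ∑ t' : Fin m → θ,
      τ (Fin.snoc (fun _ : Fin m => a₀) a : Fin (m+1) → A) (Fin.snoc t' s), ?_, ?_⟩
  · intro a
    refine ⟨fun s => Finset.sum_nonneg fun t' _ => (hτd _).1 _, ?_⟩
    rw [← sum_snoc_aux (fun t => τ (Fin.snoc (fun _ : Fin m => a₀) a : Fin (m+1) → A) t)]
    exact (hτd _).2
  · intro a a'
    have key : ∀ p p' : A,
        ∑ s : θ, ((∑ t' : Fin m → θ,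
            τ (Fin.snoc (fun _ : Fin m => a₀) p : Fin (m+1) → A) (Fin.snoc t' s) : ℝ) : ℂ) • W s p'
        = ptr (∑ t : Fin (m+1) → θ,
            (τ (Fin.snoc (fun _ : Fin m => a₀) p : Fin (m+1) → A) t : ℂ) •
              ∑ b : Fin (m+1) → A,
                ((∏ i : Fin (m+1), if (i : ℕ) + 1 = m + 1 then
                    (if b i = (Fin.snoc (fun _ : Fin m => a₀) p' : Fin (m+1) → A) i then (1:ℝ) else 0)
                  else T ((Fin.snoc (fun _ : Fin m => a₀) p' : Fin (m+1) → A) i) (b i) : ℝ) : ℂ) • nblock W t b) := by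
      intro p p'
      rw [ptr_sum]
      simp_rw [ptr_block W hW T hT a₀]
      rw [sum_snoc_aux (fun t : Fin (m+1) → θ =>
        (τ (Fin.snoc (fun _ : Fin m => a₀) p : Fin (m+1) → A) t : ℂ) • W (t (Fin.last m)) p')]
      refine Finset.sum_congr rfl fun s _ => ?_
      simp only [Fin.snoc_last]
      rw [Complex.ofReal_sum, Finset.sum_smul]
    rw [key a a', key a' a]
    have h := hτs (Fin.snoc (fun _ : Fin m => a₀) a : Fin (m+1) → A)
      (Fin.snoc (fun _ : Fin m => a₀) a' : Fin (m+1) → A)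
    exact congrArg ptr h

end AVQW
end
end
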